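/- Fix a positive integer α ≥ 2 and h > 0. Let H : ℝ → ℝ be twice continuously differentiable supported appropriately with ∫_{-1}^1 H'(ξ)dξ = 1, ∫_{-1}^1 ξ^j H'(ξ)dξ = 0 for 1 ≤ j ≤ α−1, ∫_{-1}^1 ξ H''(ξ)dξ = −1, and ∫_{-1}^1 ξ^j H''(ξ)dξ = 0 for j = 0 and 2 ≤ j ≤ α. Then for any real Δ and any integer k with 1 ≤ k ≤ α−1, ∫_{-1}^{1} (ξh − Δ)^k · ((Δ/h)·H''(ξ) − H'(ξ)) dξ = (k − 1)·(−Δ)^k. -/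

import Mathlib

open MeasureTheory Finset

/-! The weight `(Δ / h) H'' - H'` has moments `-1`, `-Δ / h` and then zeros up to order `α - 1`,
so after expanding `(ξ h - Δ)^k` binomially only the constant and linear terms survive:
`-(-Δ)^k + k h (-Δ)^(k-1) (-Δ / h) = (k - 1) (-Δ)^k`. -/

section AffinePowerMoments

variable {a b h c : ℝ} {f : ℝ → ℝ}

theorem intervalIntegral_mul_sub_pow_mul (hf : IntervalIntegrable f volume a b) (k : ℕ) :
    ∫ ξ in a..b, (ξ * h - c) ^ k * f ξ
      = ∑ j ∈ range (k + 1),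
          h ^ j * (-c) ^ (k - j) * k.choose j * ∫ ξ in a..b, ξ ^ j * f ξ := by
  have hmom (j : ℕ) : IntervalIntegrable (fun ξ => ξ ^ j * f ξ) volume a b :=
    hf.continuousOn_mul (continuous_pow j).continuousOn
  simp_rw [← intervalIntegral.integral_const_mul]
  rw [← intervalIntegral.integral_finsetSum fun j _ => (hmom j).const_mul _]
  refine intervalIntegral.integral_congr fun ξ _ => ?_
  simp only [sub_eq_add_neg, add_pow, sum_mul]
  exact sum_congr rfl fun j _ => by ring

theorem intervalIntegral_mul_sub_pow_mul_of_moments_eq_zero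
    (hf : IntervalIntegrable f volume a b) (k : ℕ)
    (hmom : ∀ j : ℕ, 2 ≤ j → j ≤ k → ∫ ξ in a..b, ξ ^ j * f ξ = 0) :
    ∫ ξ in a..b, (ξ * h - c) ^ k * f ξ
      = (-c) ^ k * (∫ ξ in a..b, f ξ) + k * h * (-c) ^ (k - 1) * ∫ ξ in a..b, ξ * f ξ := by
  rw [intervalIntegral_mul_sub_pow_mul hf]
  rcases k with _ | n
  · simp
  rw [sum_range_succ', sum_range_succ',
    sum_eq_zero fun j hj => by rw [hmom (j + 1 + 1) (by omega) (by simpa using hj), mul_zero]]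
  simp only [zero_add, pow_zero, pow_one, one_mul, Nat.choose_zero_right, Nat.choose_one_right,
    Nat.cast_one, Nat.sub_zero, mul_one, Nat.add_sub_cancel]
  ring

end AffinePowerMoments

theorem intervalIntegral_pow_mul_const_mul_sub {a b r : ℝ} {f g : ℝ → ℝ}
    (hf : IntervalIntegrable f volume a b) (hg : IntervalIntegrable g volume a b) (j : ℕ) :
    ∫ ξ in a..b, ξ ^ j * (r * f ξ - g ξ)
      = r * (∫ ξ in a..b, ξ ^ j * f ξ) - ∫ ξ in a..b, ξ ^ j * g ξ := by
  rw [← intervalIntegral.integral_const_mul, ← intervalIntegral.integral_sub]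
  · exact intervalIntegral.integral_congr fun ξ _ => by ring
  · exact (hf.continuousOn_mul (continuous_pow j).continuousOn).const_mul r
  · exact hg.continuousOn_mul (continuous_pow j).continuousOn

theorem stmt5_general (α : ℕ) (h : ℝ) (hh : 0 < h)
    (H : ℝ → ℝ) (hH : ContDiff ℝ 2 H)
    (hm0 : ∫ ξ in (-1:ℝ)..1, deriv H ξ = 1)
    (hm1 : ∀ j : ℕ, 1 ≤ j → j ≤ α - 1 → ∫ ξ in (-1:ℝ)..1, ξ ^ j * deriv H ξ = 0)
    (hm2 : ∫ ξ in (-1:ℝ)..1, ξ * deriv (deriv H) ξ = -1)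
    (hm3 : ∫ ξ in (-1:ℝ)..1, deriv (deriv H) ξ = 0)
    (hm4 : ∀ j : ℕ, 2 ≤ j → j ≤ α → ∫ ξ in (-1:ℝ)..1, ξ ^ j * deriv (deriv H) ξ = 0) :
    ∀ (Δ : ℝ) (k : ℕ), 1 ≤ k → k ≤ α - 1 →
      ∫ ξ in (-1:ℝ)..1,
          (ξ * h - Δ) ^ k * ((Δ / h) * deriv (deriv H) ξ - deriv H ξ)
        = ((k:ℝ) - 1) * (-Δ) ^ k := by
  intro Δ k hk1 hk2
  have hH' : Continuous (deriv H) := hH.continuous_deriv one_le_two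
  have hH'' : Continuous (deriv (deriv H)) :=
    (contDiff_succ_iff_deriv.mp hH).2.2.continuous_deriv le_rfl
  have hmoment := intervalIntegral_pow_mul_const_mul_sub (a := -1) (b := 1) (r := Δ / h)
    (hH''.intervalIntegrable _ _) (hH'.intervalIntegrable _ _)
  have hweight : Continuous fun ξ => Δ / h * deriv (deriv H) ξ - deriv H ξ :=
    (continuous_const.mul hH'').sub hH'
  have hhigher (j : ℕ) (hj2 : 2 ≤ j) (hjk : j ≤ k) :
      ∫ ξ in (-1:ℝ)..1, ξ ^ j * (Δ / h * deriv (deriv H) ξ - deriv H ξ) = 0 := by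
    rw [hmoment, hm4 j hj2 (by omega), hm1 j (by omega) (hjk.trans hk2), mul_zero, sub_zero]
  have hH'_first : ∫ ξ in (-1:ℝ)..1, ξ * deriv H ξ = 0 := by
    simpa using hm1 1 le_rfl (by omega)
  have hmass := hmoment 0
  have hfirst := hmoment 1
  simp only [pow_zero, one_mul, pow_one, hm0, hm2, hm3, hH'_first] at hmass hfirst
  rw [intervalIntegral_mul_sub_pow_mul_of_moments_eq_zero (hweight.intervalIntegrable _ _) k
    hhigher, hmass, hfirst, ← pow_sub_one_mul (by omega : k ≠ 0) (-Δ)]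
  field_simp
  ring

theorem stmt5 (α : ℕ) (hα : 2 ≤ α) (h : ℝ) (hh : 0 < h)
    (H : ℝ → ℝ) (hH : ContDiff ℝ 2 H)
    (hm0 : ∫ ξ in (-1:ℝ)..1, deriv H ξ = 1)
    (hm1 : ∀ j : ℕ, 1 ≤ j → j ≤ α - 1 → ∫ ξ in (-1:ℝ)..1, ξ ^ j * deriv H ξ = 0)
    (hm2 : ∫ ξ in (-1:ℝ)..1, ξ * deriv (deriv H) ξ = -1)
    (hm3 : ∫ ξ in (-1:ℝ)..1, deriv (deriv H) ξ = 0)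
    (hm4 : ∀ j : ℕ, 2 ≤ j → j ≤ α → ∫ ξ in (-1:ℝ)..1, ξ ^ j * deriv (deriv H) ξ = 0) :
    ∀ (Δ : ℝ) (k : ℕ), 1 ≤ k → k ≤ α - 1 →
      ∫ ξ in (-1:ℝ)..1,
          (ξ * h - Δ) ^ k * ((Δ / h) * deriv (deriv H) ξ - deriv H ξ)
        = ((k:ℝ) - 1) * (-Δ) ^ k :=
  stmt5_general α h hh H hH hm0 hm1 hm2 hm3 hm4
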